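/- arXiv:2108.04789 — 2 statements merged into one kernel-verified Lean document; each statement's English description precedes it below -/
import Mathlib

section
/- Let $T$ be a finite rooted tree, $g, f, w : T \to [0,\infty)$, and $\lambda \geq 4\delta > 0$. Assume $g$ is superadditive and $I(wg) \leq \delta$ on $\mathrm{supp}\, f$. Then the function $\phi(\alpha) := \frac{1}{\lambda} \mathbf{1}_{\{\delta < I(wg)(\alpha) \leq 2\lambda\}}\, I(wf)(\alpha)\, g(\alpha)$ satisfies: (a) $I(w\phi)(\omega) \geq \frac{1}{4} I(wf)(\omega)$ for every $\omega$ with $\lambda/2 < I(wg)(\omega) \leq 2\lambda$, and (b) $\sum_T w \phi^2 \leq C \frac{\delta}{\lambda} \sum_T w f^2$ for an absolute constant $C$. -/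
open Finset
open scoped Classical

/-- Hardy operator on a finite poset: sum over all elements above `α` (towards the root). -/
noncomputable def treeI {T : Type*} [Fintype T] [PartialOrder T] (h : T → ℝ) (α : T) : ℝ :=
  ∑ α' ∈ Finset.univ.filter (fun α' => α ≤ α'), h α'

/-- Adjoint operator: sum over all elements below `α`. -/
noncomputable def treeIStar {T : Type*} [Fintype T] [PartialOrder T] (h : T → ℝ) (α : T) : ℝ :=
  ∑ α' ∈ Finset.univ.filter (fun α' => α' ≤ α), h α'

/-- Children of a vertex: maximal elements strictly below it, i.e. elements covered by it. -/
noncomputable def chSet {T : Type*} [Fintype T] [PartialOrder T] (β : T) : Finset T :=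
  Finset.univ.filter (fun β' => β' ⋖ β)

/-- `g` is superadditive: at every vertex, the sum over children is at most the value. -/
def Superadditive {T : Type*} [Fintype T] [PartialOrder T] (g : T → ℝ) : Prop :=
  ∀ β : T, ∑ β' ∈ chSet β, g β' ≤ g β

/-- A finite rooted tree: a poset with a unique top (root) in which the set of elements
above any given element is totally ordered. -/
def IsRootedTree (T : Type*) [PartialOrder T] : Prop :=
  (∃ root : T, ∀ a : T, a ≤ root) ∧
    ∀ a b c : T, a ≤ b → a ≤ c → b ≤ c ∨ c ≤ b

section Aux
variable {T : Type} [Fintype T] [PartialOrder T]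

lemma treeI_nonneg (h : T → ℝ) (hh : ∀ a, 0 ≤ h a) (α : T) : 0 ≤ treeI h α :=
  Finset.sum_nonneg fun i _ => hh i

lemma treeI_antitone (h : T → ℝ) (hh : ∀ a, 0 ≤ h a) {a b : T} (hab : a ≤ b) :
    treeI h b ≤ treeI h a := by
  apply Finset.sum_le_sum_of_subset_of_nonneg
  · intro x hx
    simp only [mem_filter, mem_univ, true_and] at *
    exact hab.trans hx
  · intro i _ _; exact hh i

lemma self_le_treeI (h : T → ℝ) (hh : ∀ a, 0 ≤ h a) (α : T) : h α ≤ treeI h α := by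
  apply Finset.single_le_sum (fun i _ => hh i)
  simp

/-- decomposition of the down-set of `β` into `β` and the down-sets of children. -/
lemma downset_eq (β : T) :
    Finset.univ.filter (fun α => α ≤ β) =
      insert β ((chSet β).biUnion fun c => Finset.univ.filter (fun α => α ≤ c)) := by
  ext α
  simp only [mem_filter, mem_univ, true_and, mem_insert, mem_biUnion, chSet]
  constructor
  · intro hαβ
    rcases eq_or_lt_of_le hαβ with h | h
    · exact Or.inl h
    · right
      obtain ⟨m, hm, hmax⟩ : ∃ m ∈ (Finset.univ.filter fun γ => α ≤ γ ∧ γ < β),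
          ∀ x ∈ (Finset.univ.filter fun γ => α ≤ γ ∧ γ < β), ¬ m < x := by
        obtain ⟨m, hm, hmx⟩ := Finset.exists_maximal
          (s := Finset.univ.filter fun γ => α ≤ γ ∧ γ < β) ⟨α, by simp [h]⟩
        exact ⟨m, hm, fun x hx hlt => lt_irrefl _ (hlt.trans_le (hmx hx hlt.le))⟩
      simp only [mem_filter, mem_univ, true_and] at hm hmax
      refine ⟨m, ⟨hm.2, fun γ hγ1 hγ2 => ?_⟩, hm.1⟩
      exact hmax γ ⟨hm.1.trans hγ1.le, hγ2⟩ hγ1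
  · rintro (rfl | ⟨c, hc, hαc⟩)
    · exact le_refl _
    · exact hαc.trans hc.1.le

lemma sum_downset_decomp
    (htr : ∀ a b c : T, a ≤ b → a ≤ c → b ≤ c ∨ c ≤ b) (F : T → ℝ) (β : T) :
    ∑ α ∈ Finset.univ.filter (fun α => α ≤ β), F α
      = F β + ∑ c ∈ chSet β, ∑ α ∈ Finset.univ.filter (fun α => α ≤ c), F α := by
  rw [downset_eq, Finset.sum_insert, Finset.sum_biUnion]
  · intro c₁ h₁ c₂ h₂ hne
    simp only [chSet, coe_filter, Set.mem_setOf_eq, mem_univ, true_and] at h₁ h₂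
    refine Finset.disjoint_left.2 fun a ha1 ha2 => ?_
    simp only [mem_filter, mem_univ, true_and] at ha1 ha2
    rcases htr a c₁ c₂ ha1 ha2 with h | h
    · rcases eq_or_lt_of_le h with h | h
      · exact hne h
      · exact h₁.2 h h₂.1
    · rcases eq_or_lt_of_le h with h | h
      · exact hne h.symm
      · exact h₂.2 h h₁.1
  · simp only [mem_biUnion, mem_filter, mem_univ, true_and, chSet, not_exists]
    intro c hc
    exact absurd (hc.2.trans_lt hc.1.1) (lt_irrefl β)

lemma treeI_child (htr : ∀ a b c : T, a ≤ b → a ≤ c → b ≤ c ∨ c ≤ b)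
    (h : T → ℝ) {c β : T} (hc : c ⋖ β) :
    treeI h c = h c + treeI h β := by
  unfold treeI
  rw [show Finset.univ.filter (fun α' => c ≤ α') =
      insert c (Finset.univ.filter (fun α' => β ≤ α')) from ?_, Finset.sum_insert]
  · simp only [mem_filter, mem_univ, true_and]
    intro hβc
    exact absurd (hβc.trans_lt hc.1) (lt_irrefl β)
  · ext γ
    simp only [mem_filter, mem_univ, true_and, mem_insert]
    constructor
    · intro hcγ
      rcases eq_or_lt_of_le hcγ with h | h
      · exact Or.inl h.symm
      · right
        rcases htr c γ β hcγ hc.1.le with h2 | h2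
        · rcases eq_or_lt_of_le h2 with h3 | h3
          · exact h3.ge
          · exact absurd h3 (hc.2 h)
        · exact h2
    · rintro (rfl | hβγ)
      · exact le_refl _
      · exact hc.1.le.trans hβγ

lemma key_bound (htr : ∀ a b c : T, a ≤ b → a ≤ c → b ≤ c ∨ c ≤ b)
    (g w : T → ℝ) (hg : ∀ a, 0 ≤ g a) (hw : ∀ a, 0 ≤ w a)
    (hsup : Superadditive g) (t : ℝ) (β : T) :
    ∑ α ∈ Finset.univ.filter (fun α => α ≤ β),
        (if treeI (fun b => w b * g b) α ≤ t then (1:ℝ) else 0) * (w α * g α * g α)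
      ≤ max (t - (treeI (fun b => w b * g b) β - w β * g β)) 0 * g β := by
  induction β using WellFoundedLT.induction with
  | ind β IH =>
  rw [sum_downset_decomp htr _ β]
  have hch : ∑ c ∈ chSet β, ∑ α ∈ Finset.univ.filter (fun α => α ≤ c),
        (if treeI (fun b => w b * g b) α ≤ t then (1:ℝ) else 0) * (w α * g α * g α)
      ≤ max (t - treeI (fun b => w b * g b) β) 0 * g β := by
    calc ∑ c ∈ chSet β, ∑ α ∈ Finset.univ.filter (fun α => α ≤ c),
          (if treeI (fun b => w b * g b) α ≤ t then (1:ℝ) else 0) * (w α * g α * g α)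
        ≤ ∑ c ∈ chSet β, max (t - treeI (fun b => w b * g b) β) 0 * g c := by
          apply Finset.sum_le_sum
          intro c hc
          have hcb : c ⋖ β := by simpa [chSet] using hc
          have := IH c hcb.1
          have hrw : treeI (fun b => w b * g b) c - w c * g c
              = treeI (fun b => w b * g b) β := by
            rw [treeI_child htr _ hcb]; ring
          rwa [hrw] at this
      _ = max (t - treeI (fun b => w b * g b) β) 0 * ∑ c ∈ chSet β, g c := by
          rw [Finset.mul_sum]
      _ ≤ max (t - treeI (fun b => w b * g b) β) 0 * g β :=
          mul_le_mul_of_nonneg_left (hsup β) (le_max_right _ _)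
  by_cases h : treeI (fun b => w b * g b) β ≤ t
  · have h0 : max (t - treeI (fun b => w b * g b) β) 0
        = t - treeI (fun b => w b * g b) β := max_eq_left (by linarith)
    have hwg : 0 ≤ w β * g β := mul_nonneg (hw β) (hg β)
    have h1 : max (t - (treeI (fun b => w b * g b) β - w β * g β)) 0
        = t - (treeI (fun b => w b * g b) β - w β * g β) := max_eq_left (by linarith)
    rw [h0] at hch
    rw [h1, if_pos h]
    nlinarith [hg β, hw β]
  · rw [if_neg h]
    have : max (t - treeI (fun b => w b * g b) β) 0
        ≤ max (t - (treeI (fun b => w b * g b) β - w β * g β)) 0 := by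
      apply max_le_max _ le_rfl
      have := mul_nonneg (hw β) (hg β)
      linarith
    nlinarith [hg β, hch]

lemma inner_eq (h : T → ℝ) {α β : T} (hβ : α ≤ β) :
    ∑ γ ∈ Finset.univ.filter (fun γ => α ≤ γ), (if β ≤ γ then h β * h γ else 0)
      = h β * treeI h β := by
  rw [← Finset.sum_filter, Finset.filter_filter, treeI, Finset.mul_sum]
  apply Finset.sum_congr _ (fun x _ => rfl)
  apply Finset.filter_congr
  intro γ _
  exact ⟨fun h => h.2, fun h => ⟨hβ.trans h, h⟩⟩

lemma sq_expand (htr : ∀ a b c : T, a ≤ b → a ≤ c → b ≤ c ∨ c ≤ b)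
    (h : T → ℝ) (hh : ∀ a, 0 ≤ h a) (α : T) :
    treeI h α ^ 2 ≤ 2 * ∑ β ∈ Finset.univ.filter (fun β => α ≤ β), h β * treeI h β := by
  have expand : treeI h α ^ 2 = ∑ β ∈ Finset.univ.filter (fun β => α ≤ β),
      ∑ γ ∈ Finset.univ.filter (fun γ => α ≤ γ), h β * h γ := by
    rw [sq]; exact Finset.sum_mul_sum _ _ _ _
  rw [expand]
  have step : ∑ β ∈ Finset.univ.filter (fun β => α ≤ β),
      ∑ γ ∈ Finset.univ.filter (fun γ => α ≤ γ), h β * h γ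
      ≤ ∑ β ∈ Finset.univ.filter (fun β => α ≤ β),
        (∑ γ ∈ Finset.univ.filter (fun γ => α ≤ γ), (if β ≤ γ then h β * h γ else 0)
        + ∑ γ ∈ Finset.univ.filter (fun γ => α ≤ γ), (if γ ≤ β then h β * h γ else 0)) := by
    apply Finset.sum_le_sum; intro β hβ
    rw [← Finset.sum_add_distrib]
    apply Finset.sum_le_sum; intro γ hγ
    simp only [mem_filter, mem_univ, true_and] at hβ hγ
    have hnn : 0 ≤ h β * h γ := mul_nonneg (hh β) (hh γ)
    have h1 : (0:ℝ) ≤ if β ≤ γ then h β * h γ else 0 := by positivity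
    have h2 : (0:ℝ) ≤ if γ ≤ β then h β * h γ else 0 := by positivity
    rcases htr α β γ hβ hγ with hc | hc
    · rw [if_pos hc]; exact le_add_of_nonneg_right h2
    · rw [if_pos (c := γ ≤ β) hc]; exact le_add_of_nonneg_left h1
  refine step.trans (le_of_eq ?_)
  rw [Finset.sum_add_distrib, two_mul]
  congr 1
  · exact Finset.sum_congr rfl fun β hβ => inner_eq h (by simpa using hβ)
  · rw [Finset.sum_comm]
    apply Finset.sum_congr rfl
    intro γ hγ
    simp only [mem_filter, mem_univ, true_and] at hγ
    rw [← inner_eq h hγ]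
    apply Finset.sum_congr rfl
    intro β _
    split_ifs with hcond
    · exact mul_comm _ _
    · rfl

lemma swap_sum (F G : T → ℝ) :
    ∑ α : T, F α * ∑ β ∈ Finset.univ.filter (fun β => α ≤ β), G β
      = ∑ β : T, (∑ α ∈ Finset.univ.filter (fun α => α ≤ β), F α) * G β := by
  calc ∑ α : T, F α * ∑ β ∈ Finset.univ.filter (fun β => α ≤ β), G β
      = ∑ α : T, ∑ β ∈ Finset.univ.filter (fun β => α ≤ β), F α * G β := by
        simp_rw [Finset.mul_sum]
    _ = ∑ α : T, ∑ β : T, if α ≤ β then F α * G β else 0 := by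
        simp_rw [Finset.sum_filter]
    _ = ∑ β : T, ∑ α : T, if α ≤ β then F α * G β else 0 := Finset.sum_comm
    _ = ∑ β : T, ∑ α ∈ Finset.univ.filter (fun α => α ≤ β), F α * G β := by
        simp_rw [Finset.sum_filter]
    _ = ∑ β : T, (∑ α ∈ Finset.univ.filter (fun α => α ≤ β), F α) * G β := by
        simp_rw [Finset.sum_mul]

end Aux
/-- the explicit function
`φ(α) = (1/λ) 1_{δ < I(wg)(α) ≤ 2λ} I(wf)(α) g(α)` satisfies
(a) `I(wφ) ≥ (1/4) I(wf)` on `{λ/2 < I(wg) ≤ 2λ}` and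
(b) `∑ w φ² ≤ C (δ/λ) ∑ w f²` for an absolute constant `C`. -/
theorem stmt_2 : ∃ C : ℝ, 0 < C ∧
    ∀ (T : Type) [Fintype T] [PartialOrder T], IsRootedTree T →
    ∀ (g f w : T → ℝ) (lam δ : ℝ),
      0 < δ → 4 * δ ≤ lam →
      (∀ a, 0 ≤ g a) → (∀ a, 0 ≤ f a) → (∀ a, 0 ≤ w a) →
      Superadditive g →
      (∀ a, f a ≠ 0 → treeI (fun b => w b * g b) a ≤ δ) →
      ∀ φ : T → ℝ,
        (φ = fun α => (1 / lam) *
          (if δ < treeI (fun b => w b * g b) α ∧ treeI (fun b => w b * g b) α ≤ 2 * lam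
            then 1 else 0) * treeI (fun b => w b * f b) α * g α) →
        (∀ ω : T, lam / 2 < treeI (fun b => w b * g b) ω →
            treeI (fun b => w b * g b) ω ≤ 2 * lam →
            (1 / 4) * treeI (fun b => w b * f b) ω ≤ treeI (fun b => w b * φ b) ω) ∧
        (∑ α : T, w α * (φ α) ^ 2 ≤ C * (δ / lam) * ∑ α : T, w α * (f α) ^ 2) := by
  refine ⟨8, by norm_num, ?_⟩
  intro T _ _ htree g f w lam δ hδ hδlam hg hf hw hsup hsupp φ hφ
  obtain ⟨-, htr⟩ := htree
  have hlam : 0 < lam := by linarith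
  have hwg0 : ∀ a, 0 ≤ w a * g a := fun a => mul_nonneg (hw a) (hg a)
  have hwf0 : ∀ a, 0 ≤ w a * f a := fun a => mul_nonneg (hw a) (hf a)
  have hφ0 : ∀ a, 0 ≤ φ a := by
    intro a; rw [hφ]
    have h1 := treeI_nonneg (fun b => w b * f b) hwf0 a
    have h2 : (0:ℝ) ≤ if δ < treeI (fun b => w b * g b) a ∧
        treeI (fun b => w b * g b) a ≤ 2 * lam then 1 else 0 := by positivity
    have := hg a
    positivity
  constructor
  · -- part (a)
    intro ω hω1 hω2
    have hIfw0 : 0 ≤ treeI (fun b => w b * f b) ω := treeI_nonneg _ hwf0 ω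
    set S : Finset T := (Finset.univ.filter (fun α => ω ≤ α)).filter
      (fun α => δ < treeI (fun b => w b * g b) α) with hS
    have step1 : ∑ α ∈ S, w α * φ α ≤ treeI (fun b => w b * φ b) ω := by
      apply Finset.sum_le_sum_of_subset_of_nonneg (Finset.filter_subset _ _)
      intro i _ _; exact mul_nonneg (hw i) (hφ0 i)
    have stepB : ∀ α ∈ S, w α * φ α
        = (1/lam) * treeI (fun b => w b * f b) ω * (w α * g α) := by
      intro α hα
      simp only [hS, mem_filter, mem_univ, true_and] at hα
      obtain ⟨hωα, hδα⟩ := hα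
      have h2lam : treeI (fun b => w b * g b) α ≤ 2*lam :=
        le_trans (treeI_antitone _ hwg0 hωα) hω2
      have hIeq : treeI (fun b => w b * f b) α = treeI (fun b => w b * f b) ω := by
        unfold treeI
        apply Finset.sum_subset
        · intro x hx
          simp only [mem_filter, mem_univ, true_and] at *
          exact hωα.trans hx
        · intro x hx hnx
          simp only [mem_filter, mem_univ, true_and] at hx hnx
          rcases htr ω α x hωα hx with hc | hc
          · exact absurd hc hnx
          · have hlt : δ < treeI (fun b => w b * g b) x :=
              lt_of_lt_of_le hδα (treeI_antitone _ hwg0 hc)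
            have hfx : f x = 0 := by
              by_contra hne
              exact absurd (hsupp x hne) (not_le.2 hlt)
            simp [hfx]
      rw [hφ]
      simp only
      rw [if_pos ⟨hδα, h2lam⟩, hIeq]
      ring
    have stepC : lam/4 ≤ ∑ α ∈ S, w α * g α := by
      have hsplit := Finset.sum_filter_add_sum_filter_not
        (Finset.univ.filter (fun α => ω ≤ α))
        (fun α => δ < treeI (fun b => w b * g b) α) (fun α => w α * g α)
      have hS2 : ∑ α ∈ (Finset.univ.filter (fun α => ω ≤ α)).filter
          (fun α => ¬ δ < treeI (fun b => w b * g b) α), w α * g α ≤ δ := by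
        set S2 := (Finset.univ.filter (fun α => ω ≤ α)).filter
          (fun α => ¬ δ < treeI (fun b => w b * g b) α) with hS2def
        rcases Finset.eq_empty_or_nonempty S2 with he | hne
        · rw [he]; simp; linarith
        · obtain ⟨m, hm, hmin⟩ : ∃ m ∈ S2, ∀ x ∈ S2, ¬ x < m := by
            obtain ⟨m, hm, hmx⟩ := Finset.exists_minimal (s := S2) hne
            exact ⟨m, hm, fun x hx hlt => lt_irrefl _ (hlt.trans_le (hmx hx hlt.le))⟩
          have hm' := hm
          simp only [hS2def, mem_filter, mem_univ, true_and, not_lt] at hm'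
          calc ∑ α ∈ S2, w α * g α
              ≤ ∑ α ∈ Finset.univ.filter (fun α => m ≤ α), w α * g α := by
                apply Finset.sum_le_sum_of_subset_of_nonneg
                · intro x hx
                  have hx' := hx
                  simp only [hS2def, mem_filter, mem_univ, true_and, not_lt] at hx'
                  simp only [mem_filter, mem_univ, true_and]
                  rcases htr ω m x hm'.1 hx'.1 with hc | hc
                  · exact hc
                  · rcases eq_or_lt_of_le hc with hc2 | hc2
                    · exact hc2.ge
                    · exact absurd hc2 (hmin x hx)
                · intro i _ _; exact hwg0 i
            _ = treeI (fun b => w b * g b) m := rfl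
            _ ≤ δ := hm'.2
      have : treeI (fun b => w b * g b) ω
          = ∑ α ∈ S, w α * g α + ∑ α ∈ (Finset.univ.filter (fun α => ω ≤ α)).filter
            (fun α => ¬ δ < treeI (fun b => w b * g b) α), w α * g α := by
        rw [hS, hsplit]; rfl
      linarith
    calc (1/4) * treeI (fun b => w b * f b) ω
        = (1/lam) * treeI (fun b => w b * f b) ω * (lam/4) := by
          field_simp
      _ ≤ (1/lam) * treeI (fun b => w b * f b) ω * ∑ α ∈ S, w α * g α := by
          apply mul_le_mul_of_nonneg_left stepC
          positivity
      _ = ∑ α ∈ S, w α * φ α := by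
          rw [Finset.mul_sum]
          exact (Finset.sum_congr rfl stepB).symm
      _ ≤ treeI (fun b => w b * φ b) ω := step1
  · -- part (b)
    have hP0 : 0 ≤ ∑ α : T, w α * f α ^ 2 :=
      Finset.sum_nonneg fun i _ => mul_nonneg (hw i) (sq_nonneg _)
    set P : ℝ := ∑ α : T, w α * f α ^ 2 with hP
    set X : ℝ := ∑ β : T, g β * ((w β * f β) * treeI (fun b => w b * f b) β) with hX
    have hXnn : 0 ≤ X := Finset.sum_nonneg fun i _ => mul_nonneg (hg i)
      (mul_nonneg (hwf0 i) (treeI_nonneg _ hwf0 i))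
    have key' : ∀ t : ℝ, 0 ≤ t → ∀ β : T,
        ∑ α ∈ Finset.univ.filter (fun α => α ≤ β),
          (if treeI (fun b => w b * g b) α ≤ t then (1:ℝ) else 0) * (w α * g α * g α)
        ≤ t * g β := by
      intro t ht β
      refine (key_bound htr g w hg hw hsup t β).trans ?_
      apply mul_le_mul_of_nonneg_right _ (hg β)
      apply max_le _ ht
      have h1 := self_le_treeI (fun b => w b * g b) hwg0 β
      linarith
    have main_est : ∀ t : ℝ, 0 ≤ t →
        ∑ α : T, ((if treeI (fun b => w b * g b) α ≤ t then (1:ℝ) else 0) * (w α * g α * g α))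
          * treeI (fun b => w b * f b) α ^ 2 ≤ 2 * t * X := by
      intro t ht
      have hQ0 : ∀ α : T, 0 ≤ (if treeI (fun b => w b * g b) α ≤ t then (1:ℝ) else 0)
          * (w α * g α * g α) := by
        intro α
        have h1 := hw α; have h2 := hg α
        positivity
      calc ∑ α : T, ((if treeI (fun b => w b * g b) α ≤ t then (1:ℝ) else 0) * (w α * g α * g α))
            * treeI (fun b => w b * f b) α ^ 2
          ≤ ∑ α : T, ((if treeI (fun b => w b * g b) α ≤ t then (1:ℝ) else 0) * (w α * g α * g α))
            * (2 * ∑ β ∈ Finset.univ.filter (fun β => α ≤ β),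
                (w β * f β) * treeI (fun b => w b * f b) β) := by
            apply Finset.sum_le_sum
            intro α _
            exact mul_le_mul_of_nonneg_left (sq_expand htr (fun b => w b * f b) hwf0 α) (hQ0 α)
        _ = 2 * ∑ α : T, ((if treeI (fun b => w b * g b) α ≤ t then (1:ℝ) else 0) * (w α * g α * g α))
            * ∑ β ∈ Finset.univ.filter (fun β => α ≤ β),
                (w β * f β) * treeI (fun b => w b * f b) β := by
            rw [Finset.mul_sum]
            exact Finset.sum_congr rfl fun α _ => by ring
        _ = 2 * ∑ β : T, (∑ α ∈ Finset.univ.filter (fun α => α ≤ β),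
              ((if treeI (fun b => w b * g b) α ≤ t then (1:ℝ) else 0) * (w α * g α * g α)))
            * ((w β * f β) * treeI (fun b => w b * f b) β) := by
            congr 1
            exact swap_sum (fun α => (if treeI (fun b => w b * g b) α ≤ t then (1:ℝ) else 0)
                * (w α * g α * g α))
              (fun β => (w β * f β) * treeI (fun b => w b * f b) β)
        _ ≤ 2 * ∑ β : T, (t * g β) * ((w β * f β) * treeI (fun b => w b * f b) β) := by
            apply mul_le_mul_of_nonneg_left _ (by norm_num)
            apply Finset.sum_le_sum
            intro β _
            exact mul_le_mul_of_nonneg_right (key' t ht β)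
              (mul_nonneg (hwf0 β) (treeI_nonneg _ hwf0 β))
        _ = 2 * t * X := by
            rw [hX]
            simp only [Finset.mul_sum]
            exact Finset.sum_congr rfl fun β _ => by ring
    have hCS : X^2 ≤ P * ∑ β : T, ((if treeI (fun b => w b * g b) β ≤ δ then (1:ℝ) else 0)
        * (w β * g β * g β)) * treeI (fun b => w b * f b) β ^ 2 := by
      have hXeq : X = ∑ β : T, (Real.sqrt (w β) * f β) *
          (Real.sqrt (w β) * g β * treeI (fun b => w b * f b) β *
            (if treeI (fun b => w b * g b) β ≤ δ then (1:ℝ) else 0)) := by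
        rw [hX]
        apply Finset.sum_congr rfl
        intro β _
        by_cases hfβ : f β = 0
        · simp [hfβ]
        · rw [if_pos (hsupp β hfβ), mul_one]
          have hss : Real.sqrt (w β) * Real.sqrt (w β) = w β := Real.mul_self_sqrt (hw β)
          linear_combination (-(f β * g β * treeI (fun b => w b * f b) β)) * hss
      rw [hXeq]
      refine (Finset.sum_mul_sq_le_sq_mul_sq Finset.univ _ _).trans (le_of_eq ?_)
      rw [hP]
      congr 1
      · apply Finset.sum_congr rfl
        intro β _
        rw [mul_pow, Real.sq_sqrt (hw β)]
      · apply Finset.sum_congr rfl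
        intro β _
        by_cases hind : treeI (fun b => w b * g b) β ≤ δ
        · rw [if_pos hind, mul_one]
          have hss : Real.sqrt (w β) ^ 2 = w β := Real.sq_sqrt (hw β)
          linear_combination (g β ^ 2 * treeI (fun b => w b * f b) β ^ 2) * hss
        · rw [if_neg hind]
          ring
    have hBle : ∑ β : T, ((if treeI (fun b => w b * g b) β ≤ δ then (1:ℝ) else 0)
        * (w β * g β * g β)) * treeI (fun b => w b * f b) β ^ 2 ≤ 2 * δ * X :=
      main_est δ hδ.le
    have hXle : X ≤ 2 * δ * P := by
      rcases lt_or_ge 0 X with hpos | hneg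
      · have h2 := mul_le_mul_of_nonneg_left hBle hP0
        have h1 : X * X ≤ (2 * δ * P) * X := by nlinarith [hCS]
        exact le_of_mul_le_mul_right h1 hpos
      · have h3 : 0 ≤ 2 * δ * P := by positivity
        linarith
    have hφsq : ∑ α : T, w α * φ α ^ 2 = (1/lam)^2 *
        ∑ α : T, ((if δ < treeI (fun b => w b * g b) α ∧ treeI (fun b => w b * g b) α ≤ 2*lam
          then (1:ℝ) else 0) * (w α * g α * g α)) * treeI (fun b => w b * f b) α ^ 2 := by
      rw [hφ, Finset.mul_sum]
      apply Finset.sum_congr rfl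
      intro α _
      simp only
      by_cases hE : δ < treeI (fun b => w b * g b) α ∧ treeI (fun b => w b * g b) α ≤ 2*lam
      · rw [if_pos hE]; ring
      · rw [if_neg hE]; ring
    have hEle : ∑ α : T, ((if δ < treeI (fun b => w b * g b) α ∧ treeI (fun b => w b * g b) α ≤ 2*lam
          then (1:ℝ) else 0) * (w α * g α * g α)) * treeI (fun b => w b * f b) α ^ 2
        ≤ ∑ α : T, ((if treeI (fun b => w b * g b) α ≤ 2*lam then (1:ℝ) else 0)
          * (w α * g α * g α)) * treeI (fun b => w b * f b) α ^ 2 := by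
      apply Finset.sum_le_sum
      intro α _
      apply mul_le_mul_of_nonneg_right _ (sq_nonneg _)
      apply mul_le_mul_of_nonneg_right _ (mul_nonneg (hwg0 α) (hg α))
      by_cases hE : δ < treeI (fun b => w b * g b) α ∧ treeI (fun b => w b * g b) α ≤ 2*lam
      · rw [if_pos hE, if_pos hE.2]
      · rw [if_neg hE]
        positivity
    calc ∑ α : T, w α * φ α ^ 2
        = (1/lam)^2 * ∑ α : T, ((if δ < treeI (fun b => w b * g b) α ∧
            treeI (fun b => w b * g b) α ≤ 2*lam then (1:ℝ) else 0) * (w α * g α * g α))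
            * treeI (fun b => w b * f b) α ^ 2 := hφsq
      _ ≤ (1/lam)^2 * (2*(2*lam)*X) := by
          apply mul_le_mul_of_nonneg_left _ (by positivity)
          exact hEle.trans (main_est (2*lam) (by linarith))
      _ ≤ (1/lam)^2 * (2*(2*lam)*(2*δ*P)) := by
          apply mul_le_mul_of_nonneg_left _ (by positivity)
          have h4 : (0:ℝ) ≤ 2*(2*lam) := by linarith
          exact mul_le_mul_of_nonneg_left hXle h4
      _ = 8 * (δ/lam) * P := by
          field_simp
          ring
end

section
/- Let $T'$ be a finite rooted tree, $g : T' \to [0,\infty)$, and $p > 1$. Assume $g^{p-1}$ is superadditive and $Ig \leq \lambda$ on $\mathrm{supp}\, g$. Then for every $\gamma \in T'$, $\sum_{\alpha \leq \gamma} g(\alpha)^p \leq \lambda\, g(\gamma)^{p-1}$. -/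
open Finset
open scoped Classical

section Aux

variable {T : Type*} [Fintype T] [PartialOrder T]

lemma exists_child (hT : IsRootedTree T) {α γ : T} (h : α < γ) :
    ∃ β, α ≤ β ∧ β ⋖ γ := by
  classical
  have hne : (Finset.univ.filter (fun x => α ≤ x ∧ x < γ)).Nonempty :=
    ⟨α, by simp [h]⟩
  obtain ⟨β, hβ, hmax⟩ := Finset.exists_maximal hne
  simp only [Finset.mem_filter, Finset.mem_univ, true_and] at hβ
  refine ⟨β, hβ.1, hβ.2, ?_⟩
  intro x hβx hxγ
  exact absurd (@hmax x (by simp [le_trans hβ.1 hβx.le, hxγ]) hβx.le) hβx.not_ge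

lemma child_unique (hT : IsRootedTree T) {α β₁ β₂ γ : T}
    (h1 : β₁ ⋖ γ) (h2 : β₂ ⋖ γ) (ha1 : α ≤ β₁) (ha2 : α ≤ β₂) : β₁ = β₂ := by
  rcases hT.2 α β₁ β₂ ha1 ha2 with hle | hle
  · rcases eq_or_lt_of_le hle with h | h
    · exact h
    · exact absurd h2.lt (h1.2 h)
  · rcases eq_or_lt_of_le hle with h | h
    · exact h.symm
    · exact absurd h1.lt (h2.2 h)

lemma sum_below (hT : IsRootedTree T) (h : T → ℝ) (γ : T) :
    ∑ α ∈ Finset.univ.filter (fun α => α ≤ γ), h α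
      = h γ + ∑ β ∈ chSet γ, ∑ α ∈ Finset.univ.filter (fun α => α ≤ β), h α := by
  classical
  have hset : Finset.univ.filter (fun α => α ≤ γ)
      = insert γ ((chSet γ).biUnion (fun β => Finset.univ.filter (fun α => α ≤ β))) := by
    ext x
    simp only [Finset.mem_filter, Finset.mem_univ, true_and, Finset.mem_insert,
      Finset.mem_biUnion, chSet]
    constructor
    · intro hx
      rcases eq_or_lt_of_le hx with h | h
      · exact Or.inl h
      · obtain ⟨β, hβ1, hβ2⟩ := exists_child hT h
        exact Or.inr ⟨β, by simp [hβ2], by simp [hβ1]⟩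
    · rintro (rfl | ⟨β, hβ, hx⟩)
      · exact le_rfl
      · exact le_trans hx hβ.le
  have hdisj : (↑(chSet γ) : Set T).PairwiseDisjoint
      (fun β => Finset.univ.filter (fun α => α ≤ β)) := by
    intro β₁ h₁ β₂ h₂ hne
    simp only [Finset.mem_coe, chSet, Finset.mem_filter, Finset.mem_univ, true_and] at h₁ h₂
    refine Finset.disjoint_left.2 ?_
    intro x hx1 hx2
    simp only [Finset.mem_filter, Finset.mem_univ, true_and] at hx1 hx2
    exact hne (child_unique hT h₁ h₂ hx1 hx2)
  have hnot : γ ∉ (chSet γ).biUnion (fun β => Finset.univ.filter (fun α => α ≤ β)) := by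
    simp only [Finset.mem_biUnion, not_exists, not_and]
    intro β hβ hγβ
    simp only [chSet, Finset.mem_filter, Finset.mem_univ, true_and] at hβ hγβ
    exact absurd (lt_of_le_of_lt hγβ hβ.lt) (lt_irrefl γ)
  rw [hset, Finset.sum_insert hnot, Finset.sum_biUnion hdisj]

lemma treeI_child_s11 (hT : IsRootedTree T) (g : T → ℝ) {β γ : T} (h : β ⋖ γ) :
    treeI g β = g β + treeI g γ := by
  classical
  have hset : Finset.univ.filter (fun α' => β ≤ α')
      = insert β (Finset.univ.filter (fun α' => γ ≤ α')) := by
    ext x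
    simp only [Finset.mem_filter, Finset.mem_univ, true_and, Finset.mem_insert]
    constructor
    · intro hx
      rcases eq_or_lt_of_le hx with h' | h'
      · exact Or.inl h'.symm
      · rcases hT.2 β x γ h'.le h.lt.le with hle | hle
        · rcases eq_or_lt_of_le hle with h'' | h''
          · exact Or.inr h''.ge
          · exact absurd h'' (h.2 h')
        · exact Or.inr hle
    · rintro (rfl | hx)
      · exact le_rfl
      · exact le_trans h.lt.le hx
  have hβnot : β ∉ Finset.univ.filter (fun α' => γ ≤ α') := by
    simp only [Finset.mem_filter, Finset.mem_univ, true_and]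
    exact fun hc => absurd (lt_of_le_of_lt hc h.lt) (lt_irrefl γ)
  rw [treeI, hset, Finset.sum_insert hβnot, treeI]

lemma self_le_treeI_s11 (g : T → ℝ) (hg : ∀ a, 0 ≤ g a) (γ : T) : g γ ≤ treeI g γ := by
  classical
  exact Finset.single_le_sum (fun a _ => hg a) (by simp)

lemma key_lemma (hT : IsRootedTree T)
    (g : T → ℝ) (p lam : ℝ) (hp : 1 < p)
    (hg : ∀ a, 0 ≤ g a)
    (hsup : ∀ β : T, ∑ β' ∈ chSet β, g β' ^ (p - 1) ≤ g β ^ (p - 1))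
    (hIg : ∀ a, g a ≠ 0 → treeI g a ≤ lam) :
    ∀ γ : T, ∑ α ∈ Finset.univ.filter (fun α => α ≤ γ), g α ^ p
      ≤ g γ ^ (p - 1) * (lam + g γ - treeI g γ) := by
  classical
  have wf : WellFounded ((· < ·) : T → T → Prop) := (Finite.to_wellFoundedLT).wf
  intro γ
  induction γ using WellFounded.induction wf with
  | _ γ IH =>
  have hp1 : p - 1 ≠ 0 := by linarith
  rw [sum_below hT]
  by_cases h0 : g γ = 0
  · -- all children g = 0
    have hsum0 : ∑ β' ∈ chSet γ, g β' ^ (p - 1) = 0 := by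
      have h1 := hsup γ
      rw [h0, Real.zero_rpow hp1] at h1
      exact le_antisymm h1 (Finset.sum_nonneg fun b _ => Real.rpow_nonneg (hg b) _)
    have hch : ∀ β ∈ chSet γ, g β = 0 := by
      intro β hβ
      have := (Finset.sum_eq_zero_iff_of_nonneg
        (fun b _ => Real.rpow_nonneg (hg b) _)).1 hsum0 β hβ
      have h2 := (Real.rpow_eq_zero (hg β) hp1).1 this
      exact h2
    have hterm : ∀ β ∈ chSet γ, (∑ α ∈ Finset.univ.filter (fun α => α ≤ β), g α ^ p) ≤ 0 := by
      intro β hβ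
      have hlt : β < γ := by
        simp only [chSet, Finset.mem_filter, Finset.mem_univ, true_and] at hβ
        exact hβ.lt
      have := IH β hlt
      rw [hch β hβ, Real.zero_rpow hp1, zero_mul] at this
      exact this
    have : ∑ β ∈ chSet γ, (∑ α ∈ Finset.univ.filter (fun α => α ≤ β), g α ^ p) ≤ 0 :=
      Finset.sum_nonpos hterm
    rw [h0, Real.zero_rpow (show p ≠ 0 by linarith), Real.zero_rpow hp1, zero_mul]
    linarith
  · have hpos : 0 < g γ := lt_of_le_of_ne (hg γ) (Ne.symm h0)
    have hlam : treeI g γ ≤ lam := hIg γ h0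
    have hstep : ∀ β ∈ chSet γ, (∑ α ∈ Finset.univ.filter (fun α => α ≤ β), g α ^ p)
        ≤ g β ^ (p - 1) * (lam - treeI g γ) := by
      intro β hβ
      simp only [chSet, Finset.mem_filter, Finset.mem_univ, true_and] at hβ
      have := IH β hβ.lt
      rwa [treeI_child_s11 hT g hβ, show lam + g β - (g β + treeI g γ) = lam - treeI g γ by ring]
        at this
    calc g γ ^ p + ∑ β ∈ chSet γ, (∑ α ∈ Finset.univ.filter (fun α => α ≤ β), g α ^ p)
        ≤ g γ ^ p + ∑ β ∈ chSet γ, g β ^ (p - 1) * (lam - treeI g γ) := by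
          gcongr with β hβ
          exact hstep β hβ
      _ = g γ ^ p + (∑ β ∈ chSet γ, g β ^ (p - 1)) * (lam - treeI g γ) := by
          rw [Finset.sum_mul]
      _ ≤ g γ ^ p + g γ ^ (p - 1) * (lam - treeI g γ) := by
          have hnn : 0 ≤ lam - treeI g γ := by linarith
          have := hsup γ
          nlinarith
      _ = g γ ^ (p - 1) * (lam + g γ - treeI g γ) := by
          have : g γ ^ p = g γ ^ (p - 1) * g γ := by
            rw [← Real.rpow_add_one (ne_of_gt hpos)]
            ring_nf
          rw [this]; ring

end Aux

/-- if `g^{p-1}` is superadditive and `Ig ≤ λ` on the support of `g`, then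
`∑_{α ≤ γ} g(α)^p ≤ λ g(γ)^{p-1}` for every `γ`. -/
theorem stmt_11 {T : Type*} [Fintype T] [PartialOrder T] (hT : IsRootedTree T)
    (g : T → ℝ) (p lam : ℝ) (hp : 1 < p)
    (hg : ∀ a, 0 ≤ g a)
    (hsup : ∀ β : T, ∑ β' ∈ chSet β, g β' ^ (p - 1) ≤ g β ^ (p - 1))
    (hIg : ∀ a, g a ≠ 0 → treeI g a ≤ lam) :
    ∀ γ : T, ∑ α ∈ Finset.univ.filter (fun α => α ≤ γ), g α ^ p ≤ lam * g γ ^ (p - 1) := by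
  intro γ
  have hkey := key_lemma hT g p lam hp hg hsup hIg γ
  have h1 := self_le_treeI_s11 g hg γ
  have h2 : (0:ℝ) ≤ g γ ^ (p-1) := Real.rpow_nonneg (hg γ) _
  nlinarith
end
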